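/- Conformal transformation of the quadratic form: if Σ is a k-dimensional free boundary minimal submanifold of (M, g̃ = e^{2u}g), then for every normal field X, S_{g̃}(X,X) = S_g(X,X) + (∇^⊤u)(|X|²_g) + |X|²_g div_Σ(∇u) + k|X|²_g|∇u|²_g + k∇²u(X,X), where S_g(X,X) = |∇^⊥X|²_g − Σ_i g(R_g(X,v_i)X,v_i) − g(α,X)², using a g-orthonormal frame {v_i} of Σ. -/

import Mathlib

noncomputable section

open MeasureTheory
open scoped RealInnerProductSpace

/-- Smooth vector fields on `ℝⁿ`, our (local) model for the manifold. -/
abbrev VF (n : ℕ) := EuclideanSpace ℝ (Fin n) → EuclideanSpace ℝ (Fin n)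

/-- A Riemannian metric, as a family of continuous bilinear forms. -/
abbrev RMetric (n : ℕ) :=
  EuclideanSpace ℝ (Fin n) → (EuclideanSpace ℝ (Fin n) →L[ℝ] EuclideanSpace ℝ (Fin n) →L[ℝ] ℝ)

/-- `D` is the Levi-Civita connection of the metric `g`: it is function-linear in the
first argument, a derivation in the second one, torsion-free and compatible with `g`
(all axioms being imposed on smooth vector fields). -/
structure IsLeviCivita {n : ℕ} (g : RMetric n) (D : VF n → VF n → VF n) : Prop where
  smooth : ∀ X Y : VF n, ContDiff ℝ (⊤ : ℕ∞) X → ContDiff ℝ (⊤ : ℕ∞) Y → ContDiff ℝ (⊤ : ℕ∞) (D X Y)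
  addX : ∀ X X' Y : VF n, ContDiff ℝ (⊤ : ℕ∞) X → ContDiff ℝ (⊤ : ℕ∞) X' → ContDiff ℝ (⊤ : ℕ∞) Y →
    D (X + X') Y = D X Y + D X' Y
  smulX : ∀ (f : EuclideanSpace ℝ (Fin n) → ℝ) (X Y : VF n), ContDiff ℝ (⊤ : ℕ∞) f →
    ContDiff ℝ (⊤ : ℕ∞) X → ContDiff ℝ (⊤ : ℕ∞) Y →
    D (fun p => f p • X p) Y = fun p => f p • D X Y p
  addY : ∀ X Y Y' : VF n, ContDiff ℝ (⊤ : ℕ∞) X → ContDiff ℝ (⊤ : ℕ∞) Y → ContDiff ℝ (⊤ : ℕ∞) Y' →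
    D X (Y + Y') = D X Y + D X Y'
  leibniz : ∀ (f : EuclideanSpace ℝ (Fin n) → ℝ) (X Y : VF n), ContDiff ℝ (⊤ : ℕ∞) f →
    ContDiff ℝ (⊤ : ℕ∞) X → ContDiff ℝ (⊤ : ℕ∞) Y →
    D X (fun p => f p • Y p) = fun p => (fderiv ℝ f p (X p)) • Y p + f p • D X Y p
  torsionFree : ∀ X Y : VF n, ContDiff ℝ (⊤ : ℕ∞) X → ContDiff ℝ (⊤ : ℕ∞) Y →
    ∀ p, D X Y p - D Y X p = fderiv ℝ Y p (X p) - fderiv ℝ X p (Y p)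
  metricCompat : ∀ X Y Z : VF n, ContDiff ℝ (⊤ : ℕ∞) X → ContDiff ℝ (⊤ : ℕ∞) Y → ContDiff ℝ (⊤ : ℕ∞) Z →
    ∀ p, fderiv ℝ (fun q => g q (Y q) (Z q)) p (X p) =
      g p (D X Y p) (Z p) + g p (Y p) (D X Z p)

/-- The conformal metric `g̃ = e^{2u} g`. -/
def confMetric {n : ℕ} (u : EuclideanSpace ℝ (Fin n) → ℝ) (g : RMetric n) : RMetric n :=
  fun p => Real.exp (2 * u p) • g p

/-- Riemann curvature tensor of a connection `D`, with the sign convention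
`R(X,Y)Z = ∇_Y ∇_X Z − ∇_X ∇_Y Z + ∇_{[X,Y]} Z` used in the paper. -/
def curv {n : ℕ} (D : VF n → VF n → VF n) (X Y Z : VF n) : VF n :=
  D Y (D X Z) - D X (D Y Z) + D (fun p => fderiv ℝ Y p (X p) - fderiv ℝ X p (Y p)) Z


/-- Hessian of `u` with respect to the connection `D`:
`∇²u(X,Y) = X(Y(u)) − (∇_X Y)(u)`. -/
def hessOf {n : ℕ} (D : VF n → VF n → VF n) (u : EuclideanSpace ℝ (Fin n) → ℝ)
    (X Y : VF n) (p : EuclideanSpace ℝ (Fin n)) : ℝ :=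
  fderiv ℝ (fun q => fderiv ℝ u q (Y q)) p (X p) - fderiv ℝ u p (D X Y p)

namespace ConfAux

variable {n : ℕ}

/-- Lie bracket of vector fields on flat space. -/
def br (X Y : VF n) : VF n := fun p => fderiv ℝ Y p (X p) - fderiv ℝ X p (Y p)

lemma br_smooth (X Y : VF n) (hX : ContDiff ℝ (⊤ : ℕ∞) X) (hY : ContDiff ℝ (⊤ : ℕ∞) Y) :
    ContDiff ℝ (⊤ : ℕ∞) (br X Y) :=
  ((hY.fderiv_right (by simp)).clm_apply hX).sub ((hX.fderiv_right (by simp)).clm_apply hY)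

lemma koszul (g : RMetric n) (hgsymm : ∀ p v w, g p v w = g p w v)
    (D : VF n → VF n → VF n) (hD : IsLeviCivita g D)
    (X Y Z : VF n) (hX : ContDiff ℝ (⊤ : ℕ∞) X) (hY : ContDiff ℝ (⊤ : ℕ∞) Y) (hZ : ContDiff ℝ (⊤ : ℕ∞) Z)
    (p : EuclideanSpace ℝ (Fin n)) :
    2 * g p (D X Y p) (Z p) =
      fderiv ℝ (fun q => g q (Y q) (Z q)) p (X p)
      + fderiv ℝ (fun q => g q (X q) (Z q)) p (Y p)
      - fderiv ℝ (fun q => g q (X q) (Y q)) p (Z p)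
      + g p (br X Y p) (Z p) - g p (br X Z p) (Y p) - g p (br Y Z p) (X p) := by
  have a := hD.metricCompat X Y Z hX hY hZ p
  have b := hD.metricCompat Y X Z hY hX hZ p
  have c := hD.metricCompat Z X Y hZ hX hY p
  have t1 : br X Y p = D X Y p - D Y X p := (hD.torsionFree X Y hX hY p).symm
  have t2 : br X Z p = D X Z p - D Z X p := (hD.torsionFree X Z hX hZ p).symm
  have t3 : br Y Z p = D Y Z p - D Z Y p := (hD.torsionFree Y Z hY hZ p).symm
  rw [a, b, c, t1, t2, t3]
  simp only [map_sub, ContinuousLinearMap.sub_apply]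
  linarith [hgsymm p (Y p) (D X Z p), hgsymm p (X p) (D Y Z p),
    hgsymm p (X p) (D Z Y p), hgsymm p (D X Z p) (Y p), hgsymm p (D Y X p) (Z p)]


lemma prod_smooth (g : RMetric n) (hg : ContDiff ℝ (⊤ : ℕ∞) g) (P Q : VF n)
    (hP : ContDiff ℝ (⊤ : ℕ∞) P) (hQ : ContDiff ℝ (⊤ : ℕ∞) Q) :
    ContDiff ℝ (⊤ : ℕ∞) (fun q => g q (P q) (Q q)) := (hg.clm_apply hP).clm_apply hQ

lemma conf_deriv (u : EuclideanSpace ℝ (Fin n) → ℝ) (hu : ContDiff ℝ (⊤ : ℕ∞) u)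
    (g : RMetric n) (hg : ContDiff ℝ (⊤ : ℕ∞) g) (P Q : VF n)
    (hP : ContDiff ℝ (⊤ : ℕ∞) P) (hQ : ContDiff ℝ (⊤ : ℕ∞) Q) (p : EuclideanSpace ℝ (Fin n))
    (v : EuclideanSpace ℝ (Fin n)) :
    fderiv ℝ (fun q => confMetric u g q (P q) (Q q)) p v =
      Real.exp (2 * u p) *
        (2 * fderiv ℝ u p v * g p (P p) (Q p)
          + fderiv ℝ (fun q => g q (P q) (Q q)) p v) := by
  have hs : ContDiff ℝ (⊤ : ℕ∞) (fun q => g q (P q) (Q q)) := prod_smooth g hg P Q hP hQ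
  have hu' : HasFDerivAt u (fderiv ℝ u p) p :=
    (hu.differentiable (by simp) p).hasFDerivAt
  have h2u : HasFDerivAt (fun q => 2 * u q) ((2:ℝ) • fderiv ℝ u p) p := hu'.const_mul 2
  have hexp : HasFDerivAt (fun q => Real.exp (2 * u q))
      (Real.exp (2 * u p) • ((2:ℝ) • fderiv ℝ u p)) p :=
    (Real.hasDerivAt_exp (2 * u p)).comp_hasFDerivAt (h₂ := Real.exp) p h2u
  have hs' : HasFDerivAt (fun q => g q (P q) (Q q))
      (fderiv ℝ (fun q => g q (P q) (Q q)) p) p :=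
    (hs.differentiable (by simp) p).hasFDerivAt
  have hmul := hexp.mul hs'
  have : (fun q => confMetric u g q (P q) (Q q))
      = fun q => Real.exp (2 * u q) * g q (P q) (Q q) := by
    funext q
    simp [confMetric, ContinuousLinearMap.smul_apply, smul_eq_mul]
  rw [this, HasFDerivAt.fderiv (f := fun q => Real.exp (2 * u q) * g q (P q) (Q q)) hmul]
  simp [ContinuousLinearMap.smul_apply, smul_eq_mul]
  ring


lemma nondeg (g : RMetric n) (hgpos : ∀ p v, v ≠ 0 → 0 < g p v v)
    (p : EuclideanSpace ℝ (Fin n)) (w : EuclideanSpace ℝ (Fin n))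
    (h : ∀ z, g p w z = 0) : w = 0 := by
  by_contra hw
  exact absurd (h w) (ne_of_gt (hgpos p w hw))

lemma confMetric_apply (u : EuclideanSpace ℝ (Fin n) → ℝ) (g : RMetric n)
    (p : EuclideanSpace ℝ (Fin n)) (v w : EuclideanSpace ℝ (Fin n)) :
    confMetric u g p v w = Real.exp (2 * u p) * g p v w := by
  simp [confMetric, ContinuousLinearMap.smul_apply, smul_eq_mul]

/-- The conformal change of the Levi-Civita connection, pointwise. -/
lemma conf_formula (g : RMetric n) (hgsymm : ∀ p v w, g p v w = g p w v)
    (hgpos : ∀ p v, v ≠ 0 → 0 < g p v v) (hgsmooth : ContDiff ℝ (⊤ : ℕ∞) g)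
    (u : EuclideanSpace ℝ (Fin n) → ℝ) (hu : ContDiff ℝ (⊤ : ℕ∞) u)
    (gradu : VF n) (hgradu : ∀ p w, g p (gradu p) w = fderiv ℝ u p w)
    (D Dt : VF n → VF n → VF n)
    (hD : IsLeviCivita g D) (hDt : IsLeviCivita (confMetric u g) Dt)
    (X Y : VF n) (hX : ContDiff ℝ (⊤ : ℕ∞) X) (hY : ContDiff ℝ (⊤ : ℕ∞) Y)
    (p : EuclideanSpace ℝ (Fin n)) :
    Dt X Y p = D X Y p + (fderiv ℝ u p (X p)) • Y p + (fderiv ℝ u p (Y p)) • X p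
      - (g p (X p) (Y p)) • gradu p := by
  have key : ∀ z : EuclideanSpace ℝ (Fin n),
      g p (Dt X Y p) z = g p (D X Y p + (fderiv ℝ u p (X p)) • Y p
        + (fderiv ℝ u p (Y p)) • X p - (g p (X p) (Y p)) • gradu p) z := by
    intro z
    set Z : VF n := fun _ => z with hZdef
    have hZ : ContDiff ℝ (⊤ : ℕ∞) Z := contDiff_const
    have hZp : Z p = z := rfl
    have hgs' : ∀ q v w, confMetric u g q v w = confMetric u g q w v := by
      intro q v w; rw [confMetric_apply, confMetric_apply, hgsymm]
    have k1 := koszul g hgsymm D hD X Y Z hX hY hZ p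
    have k2 := koszul (confMetric u g) hgs' Dt hDt X Y Z hX hY hZ p
    rw [conf_deriv u hu g hgsmooth Y Z hY hZ p (X p),
        conf_deriv u hu g hgsmooth X Z hX hZ p (Y p),
        conf_deriv u hu g hgsmooth X Y hX hY p (Z p)] at k2
    rw [confMetric_apply, confMetric_apply, confMetric_apply, confMetric_apply] at k2
    have hexp : Real.exp (2 * u p) ≠ 0 := Real.exp_ne_zero _
    have k2' : 2 * g p (Dt X Y p) (Z p) =
        2 * fderiv ℝ u p (X p) * g p (Y p) (Z p)
        + fderiv ℝ (fun q => g q (Y q) (Z q)) p (X p)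
        + 2 * fderiv ℝ u p (Y p) * g p (X p) (Z p)
        + fderiv ℝ (fun q => g q (X q) (Z q)) p (Y p)
        - (2 * fderiv ℝ u p (Z p) * g p (X p) (Y p)
            + fderiv ℝ (fun q => g q (X q) (Y q)) p (Z p))
        + g p (br X Y p) (Z p) - g p (br X Z p) (Y p) - g p (br Y Z p) (X p) := by
      field_simp at k2
      nlinarith [k2, Real.exp_pos (2 * u p)]
    have hgz : fderiv ℝ u p (Z p) = g p (gradu p) (Z p) := (hgradu p (Z p)).symm
    simp only [map_add, map_sub, _root_.map_smul, ContinuousLinearMap.add_apply,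
      ContinuousLinearMap.sub_apply, ContinuousLinearMap.smul_apply, smul_eq_mul]
    rw [hgz] at k2'
    linear_combination (k2' - k1) / 2
  have hw : Dt X Y p - (D X Y p + (fderiv ℝ u p (X p)) • Y p + (fderiv ℝ u p (Y p)) • X p
      - (g p (X p) (Y p)) • gradu p) = 0 :=
    nondeg g hgpos p _ (fun z => by
      simp only [map_add, map_sub, _root_.map_smul, ContinuousLinearMap.add_apply,
        ContinuousLinearMap.sub_apply, ContinuousLinearMap.smul_apply, smul_eq_mul]
      have h := key z
      simp only [map_add, map_sub, _root_.map_smul, ContinuousLinearMap.add_apply,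
        ContinuousLinearMap.sub_apply, ContinuousLinearMap.smul_apply, smul_eq_mul] at h
      linarith)
  exact sub_eq_zero.mp hw


lemma curv_diff (g : RMetric n) (hgsymm : ∀ p v w, g p v w = g p w v)
    (hgpos : ∀ p v, v ≠ 0 → 0 < g p v v) (hgsmooth : ContDiff ℝ (⊤ : ℕ∞) g)
    (u : EuclideanSpace ℝ (Fin n) → ℝ) (hu : ContDiff ℝ (⊤ : ℕ∞) u)
    (gradu : VF n) (hgradu : ∀ p w, g p (gradu p) w = fderiv ℝ u p w)
    (hgradusm : ContDiff ℝ (⊤ : ℕ∞) gradu)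
    (D Dt : VF n → VF n → VF n)
    (hD : IsLeviCivita g D) (hDt : IsLeviCivita (confMetric u g) Dt)
    (X Y : VF n) (hX : ContDiff ℝ (⊤ : ℕ∞) X) (hY : ContDiff ℝ (⊤ : ℕ∞) Y)
    (p : EuclideanSpace ℝ (Fin n))
    (hYY : g p (Y p) (Y p) = 1) (hXY : g p (X p) (Y p) = 0) :
    g p (curv Dt X Y X p) (Y p) = g p (curv D X Y X p) (Y p)
      - g p (X p) (X p) * g p (D Y gradu p) (Y p)
      - g p (D X gradu p) (X p)
      + (fderiv ℝ u p (X p))^2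
      - g p (X p) (X p) * g p (gradu p) (gradu p)
      + (fderiv ℝ u p (Y p))^2 * g p (X p) (X p) := by
  have cf := conf_formula g hgsymm hgpos hgsmooth u hu gradu hgradu D Dt hD hDt
  have hYX : g p (Y p) (X p) = 0 := by rw [hgsymm]; exact hXY
  have hφX : ContDiff ℝ (⊤ : ℕ∞) (fun q => fderiv ℝ u q (X q)) := (hu.fderiv_right (by simp)).clm_apply hX
  have hφY : ContDiff ℝ (⊤ : ℕ∞) (fun q => fderiv ℝ u q (Y q)) := (hu.fderiv_right (by simp)).clm_apply hY
  have hρ : ContDiff ℝ (⊤ : ℕ∞) (fun q => g q (X q) (X q)) := prod_smooth g hgsmooth X X hX hX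
  have hσ : ContDiff ℝ (⊤ : ℕ∞) (fun q => g q (Y q) (X q)) := prod_smooth g hgsmooth Y X hY hX
  have hDXX : ContDiff ℝ (⊤ : ℕ∞) (D X X) := hD.smooth X X hX hX
  have hDYX : ContDiff ℝ (⊤ : ℕ∞) (D Y X) := hD.smooth Y X hY hX
  have hF1 : ContDiff ℝ (⊤ : ℕ∞) (fun q => (2 * fderiv ℝ u q (X q)) • X q) :=
    (contDiff_const.mul hφX).smul hX
  have hF2 : ContDiff ℝ (⊤ : ℕ∞) (fun q => (-(g q (X q) (X q))) • gradu q) := hρ.neg.smul hgradusm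
  have hG1 : ContDiff ℝ (⊤ : ℕ∞) (fun q => (fderiv ℝ u q (Y q)) • X q) := hφY.smul hX
  have hG2 : ContDiff ℝ (⊤ : ℕ∞) (fun q => (fderiv ℝ u q (X q)) • Y q) := hφX.smul hY
  have hG3 : ContDiff ℝ (⊤ : ℕ∞) (fun q => (-(g q (Y q) (X q))) • gradu q) := hσ.neg.smul hgradusm
  -- field identities for the conformal connection
  have EXX : Dt X X = D X X + (fun q => (2 * fderiv ℝ u q (X q)) • X q)
      + (fun q => (-(g q (X q) (X q))) • gradu q) := by
    funext q
    simp only [Pi.add_apply]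
    rw [cf X X hX hX q]
    module
  have EYX : Dt Y X = D Y X + (fun q => (fderiv ℝ u q (Y q)) • X q)
      + (fun q => (fderiv ℝ u q (X q)) • Y q)
      + (fun q => (-(g q (Y q) (X q))) • gradu q) := by
    funext q
    simp only [Pi.add_apply]
    rw [cf Y X hY hX q]
    module
  -- Leibniz expansions
  have hl1 : D Y (fun q => (2 * fderiv ℝ u q (X q)) • X q)
      = fun p => (fderiv ℝ (fun q => 2 * fderiv ℝ u q (X q)) p (Y p)) • X p
        + (2 * fderiv ℝ u p (X p)) • D Y X p :=
    hD.leibniz _ Y X (contDiff_const.mul hφX) hY hX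
  have hl2 : D Y (fun q => (-(g q (X q) (X q))) • gradu q)
      = fun p => (fderiv ℝ (fun q => -(g q (X q) (X q))) p (Y p)) • gradu p
        + (-(g p (X p) (X p))) • D Y gradu p :=
    hD.leibniz _ Y gradu hρ.neg hY hgradusm
  have hl3 : D X (fun q => (fderiv ℝ u q (Y q)) • X q)
      = fun p => (fderiv ℝ (fun q => fderiv ℝ u q (Y q)) p (X p)) • X p
        + (fderiv ℝ u p (Y p)) • D X X p :=
    hD.leibniz _ X X hφY hX hX
  have hl4 : D X (fun q => (fderiv ℝ u q (X q)) • Y q)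
      = fun p => (fderiv ℝ (fun q => fderiv ℝ u q (X q)) p (X p)) • Y p
        + (fderiv ℝ u p (X p)) • D X Y p :=
    hD.leibniz _ X Y hφX hX hY
  have hl5 : D X (fun q => (-(g q (Y q) (X q))) • gradu q)
      = fun p => (fderiv ℝ (fun q => -(g q (Y q) (X q))) p (X p)) • gradu p
        + (-(g p (Y p) (X p))) • D X gradu p :=
    hD.leibniz _ X gradu hσ.neg hX hgradusm
  -- splitting D of the conformal connection fields
  have hsplit1 : D Y (Dt X X) = D Y (D X X)
      + D Y (fun q => (2 * fderiv ℝ u q (X q)) • X q)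
      + D Y (fun q => (-(g q (X q) (X q))) • gradu q) := by
    have ha1 : D Y ((D X X + fun q => (2 * fderiv ℝ u q (X q)) • X q)
        + fun q => (-(g q (X q) (X q))) • gradu q)
        = D Y (D X X + fun q => (2 * fderiv ℝ u q (X q)) • X q)
          + D Y (fun q => (-(g q (X q) (X q))) • gradu q) :=
      hD.addY _ _ _ hY (hDXX.add hF1) hF2
    have ha2 : D Y (D X X + fun q => (2 * fderiv ℝ u q (X q)) • X q)
        = D Y (D X X) + D Y (fun q => (2 * fderiv ℝ u q (X q)) • X q) :=
      hD.addY _ _ _ hY hDXX hF1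
    rw [EXX, ha1, ha2]
  have hsplit2 : D X (Dt Y X) = D X (D Y X)
      + D X (fun q => (fderiv ℝ u q (Y q)) • X q)
      + D X (fun q => (fderiv ℝ u q (X q)) • Y q)
      + D X (fun q => (-(g q (Y q) (X q))) • gradu q) := by
    have hb1 : D X (((D Y X + fun q => (fderiv ℝ u q (Y q)) • X q)
          + fun q => (fderiv ℝ u q (X q)) • Y q)
        + fun q => (-(g q (Y q) (X q))) • gradu q)
        = D X ((D Y X + fun q => (fderiv ℝ u q (Y q)) • X q)
            + fun q => (fderiv ℝ u q (X q)) • Y q)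
          + D X (fun q => (-(g q (Y q) (X q))) • gradu q) :=
      hD.addY _ _ _ hX ((hDYX.add hG1).add hG2) hG3
    have hb2 : D X ((D Y X + fun q => (fderiv ℝ u q (Y q)) • X q)
        + fun q => (fderiv ℝ u q (X q)) • Y q)
        = D X (D Y X + fun q => (fderiv ℝ u q (Y q)) • X q)
          + D X (fun q => (fderiv ℝ u q (X q)) • Y q) :=
      hD.addY _ _ _ hX (hDYX.add hG1) hG2
    have hb3 : D X (D Y X + fun q => (fderiv ℝ u q (Y q)) • X q)
        = D X (D Y X) + D X (fun q => (fderiv ℝ u q (Y q)) • X q) :=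
      hD.addY _ _ _ hX hDYX hG1
    rw [EYX, hb1, hb2, hb3]
  -- the three pieces of curv Dt
  have e1 : Dt Y (Dt X X) p = D Y (Dt X X) p
      + (fderiv ℝ u p (Y p)) • Dt X X p + (fderiv ℝ u p (Dt X X p)) • Y p
      - g p (Y p) (Dt X X p) • gradu p := cf Y (Dt X X) hY (hDt.smooth X X hX hX) p
  have e2 : Dt X (Dt Y X) p = D X (Dt Y X) p
      + (fderiv ℝ u p (X p)) • Dt Y X p + (fderiv ℝ u p (Dt Y X p)) • X p
      - g p (X p) (Dt Y X p) • gradu p := cf X (Dt Y X) hX (hDt.smooth Y X hY hX) p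
  have e3 : Dt (br X Y) X p = D (br X Y) X p
      + (fderiv ℝ u p (br X Y p)) • X p + (fderiv ℝ u p (X p)) • br X Y p
      - g p (br X Y p) (X p) • gradu p := cf (br X Y) X (br_smooth X Y hX hY) hX p
  have hcurvDt : curv Dt X Y X p = Dt Y (Dt X X) p - Dt X (Dt Y X) p + Dt (br X Y) X p := rfl
  have hcurvD : curv D X Y X p = D Y (D X X) p - D X (D Y X) p + D (br X Y) X p := rfl
  -- pointwise values
  have EXXp := cf X X hX hX p
  have EYXp := cf Y X hY hX p
  have htf : br X Y p = D X Y p - D Y X p := (hD.torsionFree X Y hX hY p).symm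
  -- scalar derivative identities
  have hd1 : fderiv ℝ (fun q => -(g q (X q) (X q))) p (Y p)
      = -(g p (D Y X p) (X p) + g p (X p) (D Y X p)) := by
    rw [fderiv_fun_neg, ContinuousLinearMap.neg_apply, hD.metricCompat Y X X hY hX hX p]
  have hd2 : fderiv ℝ (fun q => -(g q (Y q) (X q))) p (X p)
      = -(g p (D X Y p) (X p) + g p (Y p) (D X X p)) := by
    rw [fderiv_fun_neg, ContinuousLinearMap.neg_apply, hD.metricCompat X Y X hX hY hX p]
  have hd3 : fderiv ℝ (fun q => fderiv ℝ u q (X q)) p (X p)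
      = g p (D X gradu p) (X p) + g p (gradu p) (D X X p) := by
    rw [show (fun q => fderiv ℝ u q (X q)) = (fun q => g q (gradu q) (X q))
        from funext fun q => (hgradu q (X q)).symm]
    exact hD.metricCompat X gradu X hX hgradusm hX p
  have hgr : ∀ w, fderiv ℝ u p w = g p (gradu p) w := fun w => (hgradu p w).symm
  rw [hcurvDt, hcurvD, e1, e2, e3]
  simp only [hsplit1, hsplit2, hl1, hl2, hl3, hl4, hl5, Pi.add_apply]
  rw [EXXp, EYXp, htf]
  simp only [map_add, map_sub, _root_.map_smul, map_neg, ContinuousLinearMap.add_apply,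
    ContinuousLinearMap.sub_apply, ContinuousLinearMap.smul_apply,
    ContinuousLinearMap.neg_apply, smul_eq_mul, hd1, hd2, hd3, hgr, hXY, hYX, hYY,
    hgsymm p (Y p) (gradu p)]
  ring


lemma normal_unique (g : RMetric n) (hgpos : ∀ p v, v ≠ 0 → 0 < g p v v)
    (p : EuclideanSpace ℝ (Fin n)) (Tp : Submodule ℝ (EuclideanSpace ℝ (Fin n)))
    (v w1 w2 : EuclideanSpace ℝ (Fin n))
    (h1 : v - w1 ∈ Tp) (h1' : ∀ x ∈ Tp, g p w1 x = 0)
    (h2 : v - w2 ∈ Tp) (h2' : ∀ x ∈ Tp, g p w2 x = 0) : w1 = w2 := by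
  have hmem : w1 - w2 ∈ Tp := by
    have := Tp.sub_mem h2 h1
    simpa using this
  have hz : g p (w1 - w2) (w1 - w2) = 0 := by
    have e1 := h1' _ hmem
    have e2 := h2' _ hmem
    simp only [map_sub, ContinuousLinearMap.sub_apply] at e1 e2 ⊢
    linarith
  have h0 : w1 - w2 = 0 := by
    by_contra h
    exact absurd hz (ne_of_gt (hgpos p _ h))
  exact sub_eq_zero.mp h0

end ConfAux
/-- cf. Lemma `Q`, interior part: if `Σ` is a `k`-dimensional
free boundary minimal submanifold of `(M, g̃ = e^{2u}g)`, then for every normal field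
`X`,
`S_{g̃}(X,X) = S_g(X,X) + (∇^⊤u)(|X|²_g) + |X|²_g div_Σ(∇u) + k|X|²_g|∇u|²_g + k∇²u(X,X)`,
where `S_g(X,X) = |∇^⊥X|²_g − Σᵢ g(R_g(X,vᵢ)X,vᵢ) − g(α,X)²`.
The `g̃`-quantities are expressed in the `g̃`-orthonormal frame `ṽᵢ = e^{-u}vᵢ`; all
conformal rescalings cancel, leaving `g`-quantities of `Dt`. -/
theorem conformal_interior_second_variation {n k : ℕ} (g : RMetric n)
    (hgsymm : ∀ p v w, g p v w = g p w v)
    (hgpos : ∀ p v, v ≠ 0 → 0 < g p v v)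
    (hgsmooth : ContDiff ℝ (⊤ : ℕ∞) g)
    (u : EuclideanSpace ℝ (Fin n) → ℝ) (hu : ContDiff ℝ (⊤ : ℕ∞) u)
    (D Dt : VF n → VF n → VF n)
    (hD : IsLeviCivita g D) (hDt : IsLeviCivita (confMetric u g) Dt)
    (S : Set (EuclideanSpace ℝ (Fin n)))
    (T : EuclideanSpace ℝ (Fin n) → Submodule ℝ (EuclideanSpace ℝ (Fin n)))
    -- a local tangent frame of Σ, g-orthonormal along S
    (V : Fin k → VF n) (hVsm : ∀ i, ContDiff ℝ (⊤ : ℕ∞) (V i))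
    (hVtan : ∀ i, ∀ q ∈ S, V i q ∈ T q)
    (hVon : ∀ q ∈ S, ∀ i j, g q (V i q) (V j q) = if i = j then 1 else 0)
    (hVspan : ∀ q ∈ S, ∀ w ∈ T q, w ∈ Submodule.span ℝ (Set.range fun i => V i q))
    -- a normal vector field X along Σ
    (X : VF n) (hXsm : ContDiff ℝ (⊤ : ℕ∞) X)
    (hXnorm : ∀ q ∈ S, ∀ w ∈ T q, g q (X q) w = 0)
    -- the g-gradient of u and its normal part ∇^⊥u along Σ
    (gradu : VF n) (hgradu : ∀ p w, g p (gradu p) w = fderiv ℝ u p w)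
    (hgradusm : ContDiff ℝ (⊤ : ℕ∞) gradu)
    (gperp : VF n)
    (hgperp : ∀ q ∈ S, gradu q - gperp q ∈ T q ∧ ∀ w ∈ T q, g q (gperp q) w = 0)
    -- normal parts ∇^⊥_{vᵢ}X and ∇̃^⊥_{vᵢ}X of ∇_{vᵢ}X and ∇̃_{vᵢ}X
    (DperpX DtperpX : Fin k → VF n)
    (hDperpX : ∀ i, ∀ q ∈ S, D (V i) X q - DperpX i q ∈ T q ∧ ∀ w ∈ T q, g q (DperpX i q) w = 0)
    (hDtperpX : ∀ i, ∀ q ∈ S, Dt (V i) X q - DtperpX i q ∈ T q ∧ ∀ w ∈ T q, g q (DtperpX i q) w = 0)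
    -- the second fundamental forms α(Vᵢ,Vⱼ), α̃(Vᵢ,Vⱼ)
    (A At : Fin k → Fin k → VF n)
    (hA : ∀ i j, ∀ q ∈ S, D (V i) (V j) q - A i j q ∈ T q ∧ ∀ w ∈ T q, g q (A i j q) w = 0)
    (hAt : ∀ i j, ∀ q ∈ S, Dt (V i) (V j) q - At i j q ∈ T q ∧ ∀ w ∈ T q, g q (At i j q) w = 0)
    -- Σ is minimal with respect to g̃
    (hmin : ∀ q ∈ S, ∑ i, At i i q = 0)
    (p : EuclideanSpace ℝ (Fin n)) (hp : p ∈ S) :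
    -- S_{g̃}(X,X)  =  S_g(X,X) + (∇^⊤u)(|X|²) + |X|² div_Σ(∇u) + k|X|²|∇u|² + k ∇²u(X,X)
    ((∑ i, g p (DtperpX i p) (DtperpX i p))
        - (∑ i, g p (curv Dt X (V i) X p) (V i p))
        - ∑ i, ∑ j, (g p (At i j p) (X p)) ^ 2)
      = ((∑ i, g p (DperpX i p) (DperpX i p))
          - (∑ i, g p (curv D X (V i) X p) (V i p))
          - ∑ i, ∑ j, (g p (A i j p) (X p)) ^ 2)
        + fderiv ℝ (fun q => g q (X q) (X q)) p (gradu p - gperp p)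
        + g p (X p) (X p) * (∑ i, g p (D (V i) gradu p) (V i p))
        + (k : ℝ) * (g p (X p) (X p)) * (g p (gradu p) (gradu p))
        + (k : ℝ) * hessOf D u X X p := by
  classical
  open ConfAux in
  have cf := ConfAux.conf_formula g hgsymm hgpos hgsmooth u hu gradu hgradu D Dt hD hDt
  have hgr : ∀ q w, fderiv ℝ u q w = g q (gradu q) w := fun q w => (hgradu q w).symm
  have hXV : ∀ i, g p (X p) (V i p) = 0 := fun i => hXnorm p hp _ (hVtan i p hp)
  have hVX : ∀ i, g p (V i p) (X p) = 0 := fun i => by rw [hgsymm]; exact hXV i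
  have hVV : ∀ i j, g p (V i p) (V j p) = if i = j then 1 else 0 := hVon p hp
  have hGmem : gradu p - gperp p ∈ T p := (hgperp p hp).1
  -- value of the conformal second fundamental form
  have hAtp : ∀ i j, At i j p = A i j p - (if i = j then (1:ℝ) else 0) • gperp p := by
    intro i j
    refine ConfAux.normal_unique g hgpos p (T p) (Dt (V i) (V j) p) _ _
      (hAt i j p hp).1 (hAt i j p hp).2 ?_ ?_
    · rw [cf (V i) (V j) (hVsm i) (hVsm j) p]
      have heq : D (V i) (V j) p + (fderiv ℝ u p (V i p)) • V j p
          + (fderiv ℝ u p (V j p)) • V i p - g p (V i p) (V j p) • gradu p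
          - (A i j p - (if i = j then (1:ℝ) else 0) • gperp p)
          = (D (V i) (V j) p - A i j p) + (fderiv ℝ u p (V i p)) • V j p
            + (fderiv ℝ u p (V j p)) • V i p
            - (if i = j then (1:ℝ) else 0) • (gradu p - gperp p) := by
        rw [hVV i j]
        by_cases h : i = j <;> simp [h] <;> module
      rw [heq]
      exact Submodule.sub_mem _
        (Submodule.add_mem _
          (Submodule.add_mem _ (hA i j p hp).1 (Submodule.smul_mem _ _ (hVtan j p hp)))
          (Submodule.smul_mem _ _ (hVtan i p hp)))
        (Submodule.smul_mem _ _ hGmem)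
    · intro x hx
      simp only [map_sub, _root_.map_smul, ContinuousLinearMap.sub_apply,
        ContinuousLinearMap.smul_apply, smul_eq_mul]
      rw [(hA i j p hp).2 x hx, (hgperp p hp).2 x hx]
      ring
  -- value of the conformal normal derivative
  have hDtpX : ∀ i, DtperpX i p = DperpX i p + (fderiv ℝ u p (V i p)) • X p := by
    intro i
    refine ConfAux.normal_unique g hgpos p (T p) (Dt (V i) X p) _ _
      (hDtperpX i p hp).1 (hDtperpX i p hp).2 ?_ ?_
    · rw [cf (V i) X (hVsm i) hXsm p]
      have heq : D (V i) X p + (fderiv ℝ u p (V i p)) • X p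
          + (fderiv ℝ u p (X p)) • V i p - g p (V i p) (X p) • gradu p
          - (DperpX i p + (fderiv ℝ u p (V i p)) • X p)
          = (D (V i) X p - DperpX i p) + (fderiv ℝ u p (X p)) • V i p := by
        rw [hVX i, zero_smul]
        module
      rw [heq]
      exact Submodule.add_mem _ (hDperpX i p hp).1 (Submodule.smul_mem _ _ (hVtan i p hp))
    · intro x hx
      simp only [map_add, _root_.map_smul, ContinuousLinearMap.add_apply,
        ContinuousLinearMap.smul_apply, smul_eq_mul]
      rw [(hDperpX i p hp).2 x hx, hXnorm p hp x hx]
      ring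
  -- g(gperp, X) = du(X)
  have hb : g p (gperp p) (X p) = fderiv ℝ u p (X p) := by
    have h1 : g p (gradu p - gperp p) (X p) = 0 := by
      rw [hgsymm]; exact hXnorm p hp _ hGmem
    have h2 : g p (gradu p) (X p) = fderiv ℝ u p (X p) := hgradu p (X p)
    simp only [map_sub, ContinuousLinearMap.sub_apply] at h1
    linarith
  -- minimality: ∑ g(A i i, X) = k * du(X)
  have hminX : ∑ i, g p (A i i p) (X p) = (k:ℝ) * fderiv ℝ u p (X p) := by
    have h0 : g p (∑ i, At i i p) (X p) = 0 := by rw [hmin p hp]; simp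
    rw [map_sum, ContinuousLinearMap.sum_apply] at h0
    have h1 : ∀ i, g p (At i i p) (X p)
        = g p (A i i p) (X p) - fderiv ℝ u p (X p) := by
      intro i
      rw [hAtp i i]
      simp only [map_sub, _root_.map_smul, ContinuousLinearMap.sub_apply,
        ContinuousLinearMap.smul_apply, smul_eq_mul, hb]
      simp
    rw [Finset.sum_congr rfl (fun i _ => h1 i), Finset.sum_sub_distrib,
      Finset.sum_const, Finset.card_univ, Fintype.card_fin, nsmul_eq_mul] at h0
    linarith
  -- tangential decomposition of the gradient
  have hGdecomp : gradu p - gperp p = ∑ i, (fderiv ℝ u p (V i p)) • V i p := by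
    obtain ⟨c, hc⟩ := (Submodule.mem_span_range_iff_exists_fun ℝ).mp
      (hVspan p hp _ hGmem)
    have hci : ∀ i, c i = fderiv ℝ u p (V i p) := by
      intro i
      have h1 : g p (∑ j, c j • V j p) (V i p) = c i := by
        rw [map_sum, ContinuousLinearMap.sum_apply]
        have : ∀ j, g p (c j • V j p) (V i p) = if j = i then c j else 0 := by
          intro j
          rw [_root_.map_smul, ContinuousLinearMap.smul_apply, smul_eq_mul, hVV j i]
          by_cases h : j = i <;> simp [h]
        rw [Finset.sum_congr rfl (fun j _ => this j), Finset.sum_ite_eq' Finset.univ i c]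
        simp
      rw [hc] at h1
      simp only [map_sub, ContinuousLinearMap.sub_apply] at h1
      rw [(hgperp p hp).2 _ (hVtan i p hp), hgradu p (V i p)] at h1
      linarith
    rw [← hc]
    exact Finset.sum_congr rfl fun i _ => by rw [hci i]
  -- Hessian identity
  have hhess : hessOf D u X X p = g p (D X gradu p) (X p) := by
    have hd3 : fderiv ℝ (fun q => fderiv ℝ u q (X q)) p (X p)
        = g p (D X gradu p) (X p) + g p (gradu p) (D X X p) := by
      rw [show (fun q => fderiv ℝ u q (X q)) = (fun q => g q (gradu q) (X q))
          from funext fun q => (hgradu q (X q)).symm]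
      exact hD.metricCompat X gradu X hXsm hgradusm hXsm p
    rw [hessOf, hd3, hgr p (D X X p)]
    ring
  -- first term
  have hDpX : ∀ i, g p (DperpX i p) (X p) = g p (D (V i) X p) (X p) := by
    intro i
    have h1 : g p (D (V i) X p - DperpX i p) (X p) = 0 := by
      rw [hgsymm]; exact hXnorm p hp _ (hDperpX i p hp).1
    simp only [map_sub, ContinuousLinearMap.sub_apply] at h1
    linarith
  have hrhoV : ∀ i, fderiv ℝ (fun q => g q (X q) (X q)) p (V i p)
      = 2 * g p (D (V i) X p) (X p) := by
    intro i
    rw [hD.metricCompat (V i) X X (hVsm i) hXsm hXsm p, hgsymm p (X p) (D (V i) X p)]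
    ring
  have hT1 : ∑ i, g p (DtperpX i p) (DtperpX i p)
      = ∑ i, g p (DperpX i p) (DperpX i p)
        + fderiv ℝ (fun q => g q (X q) (X q)) p (gradu p - gperp p)
        + (∑ i, (fderiv ℝ u p (V i p))^2) * g p (X p) (X p) := by
    have hper : ∀ i, g p (DtperpX i p) (DtperpX i p)
        = g p (DperpX i p) (DperpX i p)
          + (fderiv ℝ u p (V i p)) * (2 * g p (D (V i) X p) (X p))
          + (fderiv ℝ u p (V i p))^2 * g p (X p) (X p) := by
      intro i
      rw [hDtpX i]
      simp only [map_add, _root_.map_smul, ContinuousLinearMap.add_apply,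
        ContinuousLinearMap.smul_apply, smul_eq_mul]
      rw [hgsymm p (X p) (DperpX i p), hDpX i]
      ring
    have hmid : ∑ i, (fderiv ℝ u p (V i p)) * (2 * g p (D (V i) X p) (X p))
        = fderiv ℝ (fun q => g q (X q) (X q)) p (gradu p - gperp p) := by
      rw [hGdecomp, map_sum]
      exact (Finset.sum_congr rfl fun i _ => by
        rw [_root_.map_smul, smul_eq_mul, hrhoV i]).symm
    rw [Finset.sum_congr rfl fun i _ => hper i, Finset.sum_add_distrib,
      Finset.sum_add_distrib, hmid, ← Finset.sum_mul]
  -- curvature term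
  have hT2 : ∑ i, g p (curv Dt X (V i) X p) (V i p)
      = ∑ i, g p (curv D X (V i) X p) (V i p)
        - g p (X p) (X p) * (∑ i, g p (D (V i) gradu p) (V i p))
        - (k:ℝ) * g p (D X gradu p) (X p)
        + (k:ℝ) * (fderiv ℝ u p (X p))^2
        - (k:ℝ) * (g p (X p) (X p) * g p (gradu p) (gradu p))
        + (∑ i, (fderiv ℝ u p (V i p))^2) * g p (X p) (X p) := by
    have hci : ∀ i, g p (curv Dt X (V i) X p) (V i p)
        = g p (curv D X (V i) X p) (V i p)
          - g p (X p) (X p) * g p (D (V i) gradu p) (V i p)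
          - g p (D X gradu p) (X p)
          + (fderiv ℝ u p (X p))^2
          - g p (X p) (X p) * g p (gradu p) (gradu p)
          + (fderiv ℝ u p (V i p))^2 * g p (X p) (X p) :=
      fun i => ConfAux.curv_diff g hgsymm hgpos hgsmooth u hu gradu hgradu hgradusm
        D Dt hD hDt X (V i) hXsm (hVsm i) p (by rw [hVV i i]; simp) (hXV i)
    rw [Finset.sum_congr rfl fun i _ => hci i]
    simp only [Finset.sum_add_distrib, Finset.sum_sub_distrib, Finset.sum_const,
      Finset.card_univ, Fintype.card_fin, nsmul_eq_mul, ← Finset.mul_sum, ← Finset.sum_mul]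
  -- second fundamental form term
  have hT3 : ∑ i, ∑ j, (g p (At i j p) (X p))^2
      = (∑ i, ∑ j, (g p (A i j p) (X p))^2) - (k:ℝ) * (fderiv ℝ u p (X p))^2 := by
    have hAtX : ∀ i j, g p (At i j p) (X p)
        = g p (A i j p) (X p) - (if i = j then 1 else 0) * fderiv ℝ u p (X p) := by
      intro i j
      rw [hAtp i j]
      simp only [map_sub, _root_.map_smul, ContinuousLinearMap.sub_apply,
        ContinuousLinearMap.smul_apply, smul_eq_mul, hb]
    have hper : ∀ i, ∑ j, (g p (At i j p) (X p))^2
        = (∑ j, (g p (A i j p) (X p))^2)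
          - 2 * fderiv ℝ u p (X p) * g p (A i i p) (X p)
          + (fderiv ℝ u p (X p))^2 := by
      intro i
      have h1 : ∀ j, (g p (At i j p) (X p))^2
          = (g p (A i j p) (X p))^2
            - 2 * fderiv ℝ u p (X p) * (if i = j then g p (A i j p) (X p) else 0)
            + (fderiv ℝ u p (X p))^2 * (if i = j then 1 else 0) := by
        intro j
        rw [hAtX i j]
        by_cases h : i = j <;> simp [h] <;> ring
      rw [Finset.sum_congr rfl fun j _ => h1 j, Finset.sum_add_distrib,
        Finset.sum_sub_distrib]
      simp only [Finset.sum_ite_eq, Finset.mem_univ, if_true, ← Finset.mul_sum]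
      ring
    rw [Finset.sum_congr rfl fun i _ => hper i, Finset.sum_add_distrib,
      Finset.sum_sub_distrib, ← Finset.mul_sum, hminX, Finset.sum_const,
      Finset.card_univ, Fintype.card_fin, nsmul_eq_mul]
    ring
  rw [hT1, hT2, hT3, hhess]
  ring
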